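/- arXiv:0712.0028 — 4 statements merged into one kernel-verified Lean document; each statement's English description precedes it below -/
import Mathlib

section
/- Let R > r > 0, a ∈ C^n, and let P be a polynomial of degree at most k in n complex variables. Then there exists a point w in the closed polydisk of radius r centered at a such that |P(w)| ≥ (r/R)^k · sup_{z ∈ Δ(a,R)} |P(z)|. -/
/-!
Let `w` maximize `‖P‖` on the closed polydisk of radius `r`. For `z ∈ Δ(a,R)` the restriction
`f t = P (a + t • (z - a))` has degree `≤ k` and `‖f‖ ≤ ‖P w‖` on the circle `‖t‖ = ρ := r / R`.
The reflected polynomial `g s = s ^ k * f (ρ / s)` is bounded by `‖P w‖` on the unit circle,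
so by the maximum modulus principle also at `s = ρ`, where `‖g ρ‖ = ρ ^ k * ‖f 1‖ = ρ ^ k * ‖P z‖`.
-/

open Polynomial Metric

def polydisk (n : ℕ) (a : Fin n → ℂ) (R : ℝ) : Set (Fin n → ℂ) :=
  {z | ∀ j, ‖z j - a j‖ < R}

namespace MvPolynomial
variable {σ R : Type*} [CommSemiring R]

noncomputable def restrictLine (P : MvPolynomial σ R) (a v : σ → R) : R[X] :=
  aeval (fun j => Polynomial.C (v j) * Polynomial.X + Polynomial.C (a j)) P

theorem natDegree_restrictLine_le (P : MvPolynomial σ R) (a v : σ → R) :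
    (P.restrictLine a v).natDegree ≤ P.totalDegree :=
  (aeval_natDegree_le P le_rfl _ fun _ => natDegree_linear_le).trans_eq (mul_one _)

theorem eval_restrictLine (P : MvPolynomial σ R) (a v : σ → R) (t : R) :
    (P.restrictLine a v).eval t = eval (a + t • v) P := by
  have hline : (fun j => Polynomial.aeval t (Polynomial.C (v j) * Polynomial.X +
      Polynomial.C (a j))) = a + t • v := by
    ext j
    simp only [map_add, map_mul, Polynomial.aeval_C, Polynomial.aeval_X, Pi.add_apply,
      Pi.smul_apply, smul_eq_mul, Algebra.algebraMap_self, RingHom.id_apply]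
    ring
  rw [restrictLine, ← Polynomial.coe_aeval_eq_eval, ← AlgHom.comp_apply, comp_aeval, hline]
  rfl

end MvPolynomial

namespace Polynomial

theorem eval_reflect_inv_mul_pow {K : Type*} [Field K] {f : K[X]} {N : ℕ} (hf : f.natDegree ≤ N)
    {x : K} (hx : x ≠ 0) : (f.reflect N).eval x⁻¹ * x ^ N = f.eval x := by
  have := invertibleOfNonzero hx
  simpa only [invOf_eq_inv, eval₂_id] using eval₂_reflect_mul_pow (RingHom.id K) x N f hf

theorem div_pow_mul_norm_eval_le {f : ℂ[X]} {k : ℕ} (hf : f.natDegree ≤ k) {ρ M : ℝ} (hρ : 0 < ρ)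
    (hM : ∀ t : ℂ, ‖t‖ = ρ → ‖f.eval t‖ ≤ M) {z : ℂ} (hz : ρ ≤ ‖z‖) :
    (ρ / ‖z‖) ^ k * ‖f.eval z‖ ≤ M := by
  have hρ' : (ρ : ℂ) ≠ 0 := by exact_mod_cast hρ.ne'
  set g := (f.comp (C (ρ : ℂ) * X)).reflect k
  have hg : ∀ y : ℂ, y ≠ 0 → ‖g.eval y⁻¹‖ * ‖y‖ ^ k = ‖f.eval (ρ * y)‖ := by
    intro y hy
    have hdeg : (f.comp (C (ρ : ℂ) * X)).natDegree ≤ k := by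
      rw [natDegree_comp, natDegree_C_mul_X _ hρ', mul_one]
      exact hf
    rw [← norm_pow, ← norm_mul, eval_reflect_inv_mul_pow hdeg hy, eval_comp]
    simp
  have hg_sphere : ∀ s ∈ frontier (ball (0 : ℂ) 1), ‖g.eval s‖ ≤ M := by
    intro s hs
    rw [frontier_ball 0 one_ne_zero, mem_sphere_zero_iff_norm] at hs
    have hs0 : s⁻¹ ≠ 0 := by simp [← norm_ne_zero_iff, hs]
    have := hg s⁻¹ hs0
    rw [inv_inv, norm_inv, hs, inv_one, one_pow, mul_one] at this
    exact this ▸ hM _ (by simp [hs, abs_of_pos hρ])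
  have hz0 : z ≠ 0 := norm_pos_iff.mp (hρ.trans_le hz)
  have hmax : ‖g.eval (ρ / z)‖ ≤ M := by
    refine Complex.norm_le_of_forall_mem_frontier_norm_le isBounded_ball
      g.differentiable.diffContOnCl hg_sphere ?_
    rw [closure_ball 0 one_ne_zero, mem_closedBall_zero_iff, norm_div, Complex.norm_real,
      Real.norm_of_nonneg hρ.le]
    exact div_le_one_of_le₀ hz (norm_nonneg z)
  have := hg (z / ρ) (div_ne_zero hz0 hρ')
  rw [inv_div, mul_div_cancel₀ _ hρ', norm_div, Complex.norm_real, Real.norm_of_nonneg hρ.le]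
    at this
  calc (ρ / ‖z‖) ^ k * ‖f.eval z‖ = (ρ / ‖z‖) ^ k * (‖z‖ / ρ) ^ k * ‖g.eval (ρ / z)‖ := by
        rw [← this]; ring
    _ = ‖g.eval (ρ / z)‖ := by
        rw [← mul_pow, div_mul_div_cancel₀ (norm_ne_zero_iff.mpr hz0), div_self hρ.ne', one_pow,
          one_mul]
    _ ≤ M := hmax

end Polynomial

/-- a polynomial of degree `≤ k` attains, at some point of the closed polydisk of
radius `r`, a value at least `(r/R)^k` times its supremum over `Δ(a,R)`. -/
theorem bernstein_lower_bound (n : ℕ) (a : Fin n → ℂ) (R r : ℝ) (hr : 0 < r) (hrR : r < R)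
    (k : ℕ) (P : MvPolynomial (Fin n) ℂ) (hdeg : P.totalDegree ≤ k) :
    ∃ w : Fin n → ℂ, (∀ j, ‖w j - a j‖ ≤ r) ∧
      ∀ z ∈ polydisk n a R,
        (r / R) ^ k * ‖MvPolynomial.eval z P‖ ≤ ‖MvPolynomial.eval w P‖ := by
  have hR : 0 < R := hr.trans hrR
  obtain ⟨w, hw, hw_max⟩ :=
    (isCompact_univ_pi fun j => isCompact_closedBall (a j) r).exists_isMaxOn
      ⟨a, fun j _ => mem_closedBall_self hr.le⟩ (MvPolynomial.continuous_eval P).norm.continuousOn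
  refine ⟨w, fun j => mem_closedBall_iff_norm.mp (hw j trivial), fun z hz => ?_⟩
  have hline := MvPolynomial.eval_restrictLine P a (z - a)
  have hM : ∀ t : ℂ, ‖t‖ = r / R →
      ‖(P.restrictLine a (z - a)).eval t‖ ≤ ‖MvPolynomial.eval w P‖ := by
    intro t ht
    rw [hline]
    refine hw_max fun j _ => ?_
    rw [mem_closedBall_iff_norm]
    calc ‖(a + t • (z - a)) j - a j‖ = ‖t‖ * ‖z j - a j‖ := by simp
      _ ≤ r / R * R := by rw [ht]; gcongr; exact (hz j).le
      _ = r := div_mul_cancel₀ r hR.ne'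
  have hdeg_line := (MvPolynomial.natDegree_restrictLine_le P a (z - a)).trans hdeg
  simpa [hline] using div_pow_mul_norm_eval_le hdeg_line (div_pos hr hR) hM (z := 1)
    (by simp [div_le_one hR, hrR.le])
end

section
/- Let K ⊂ R^m be compact, let f : K → C be infinitely differentiable with |f| ≤ 1 on K, and suppose there is a constant C such that |∂^α f| ≤ C^{|α|}(α!)^s on K for every multi-index α (i.e., f is of Gevrey class G^s with constant C). Then for every positive integer k and every multi-index α, |∂^α (f^k)| ≤ C^{|α|} · binom(α + k − 1, α) · (α!)^s on K, where binom(α + k − 1, α) = Π_j binom(α_j + k − 1, α_j). -/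
/-- The partial derivative `∂/∂x_j` of a function on `ℝ^m`. -/
noncomputable def pderivj (m : ℕ) (j : Fin m) (f : (Fin m → ℝ) → ℂ) : (Fin m → ℝ) → ℂ :=
  fun x => fderiv ℝ f x (Pi.single j 1)

/-- The mixed partial derivative `∂^α` for a multi-index `α`. -/
noncomputable def mpderiv (m : ℕ) (α : Fin m → ℕ) (f : (Fin m → ℝ) → ℂ) : (Fin m → ℝ) → ℂ :=
  ((List.ofFn fun j : Fin m => (pderivj m j)^[α j]).foldr (· ∘ ·) id) f


lemma smoothD {m : ℕ} (j : Fin m) {f : (Fin m → ℝ) → ℂ} (hf : ContDiff ℝ (⊤ : ℕ∞) f) :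
    ContDiff ℝ (⊤ : ℕ∞) (pderivj m j f) :=
  (hf.fderiv_right ((by simp))).clm_apply contDiff_const

lemma smoothDiter {m : ℕ} (j : Fin m) (n : ℕ) {f : (Fin m → ℝ) → ℂ} (hf : ContDiff ℝ (⊤ : ℕ∞) f) :
    ContDiff ℝ (⊤ : ℕ∞) ((pderivj m j)^[n] f) := by
  induction n with
  | zero => exact hf
  | succ n ih => rw [Function.iterate_succ_apply']; exact smoothD j ih

lemma Dmul {m : ℕ} (j : Fin m) {f g : (Fin m → ℝ) → ℂ}
    (hf : Differentiable ℝ f) (hg : Differentiable ℝ g) :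
    pderivj m j (f * g) = f * pderivj m j g + g * pderivj m j f := by
  funext x
  have h : fderiv ℝ (f * g) x = f x • fderiv ℝ g x + g x • fderiv ℝ f x := by
    have := fderiv_mul (hf x) (hg x)
    simpa [Pi.mul_def] using this
  simp [pderivj, h, smul_eq_mul]

lemma Dsum {m : ℕ} (j : Fin m) {ι : Type*} (t : Finset ι) (F : ι → (Fin m → ℝ) → ℂ)
    (h : ∀ i ∈ t, Differentiable ℝ (F i)) :
    pderivj m j (∑ i ∈ t, F i) = ∑ i ∈ t, pderivj m j (F i) := by
  funext x
  have hsum : (∑ i ∈ t, F i) = fun y => ∑ i ∈ t, F i y := by funext y; simp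
  have h2 : fderiv ℝ (∑ i ∈ t, F i) x = ∑ i ∈ t, fderiv ℝ (F i) x := by
    rw [fderiv_sum fun i hi => ((h i hi) x)]
  simp [pderivj, h2]

lemma Dsmul {m : ℕ} (j : Fin m) (c : ℂ) {f : (Fin m → ℝ) → ℂ} (hf : Differentiable ℝ f) :
    pderivj m j (c • f) = c • pderivj m j f := by
  funext x
  have h : fderiv ℝ (fun y => c • f y) x = c • fderiv ℝ f x := fderiv_const_smul (hf x) c
  show fderiv ℝ (c • f) x (Pi.single j 1) = c • (fderiv ℝ f x (Pi.single j 1))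
  have h2 : (c • f) = fun y => c • f y := rfl
  rw [h2, h]; simp

lemma Diter_sum {m : ℕ} (j : Fin m) (n : ℕ) {ι : Type*} (t : Finset ι)
    (F : ι → (Fin m → ℝ) → ℂ) (h : ∀ i ∈ t, ContDiff ℝ (⊤ : ℕ∞) (F i)) :
    (pderivj m j)^[n] (∑ i ∈ t, F i) = ∑ i ∈ t, (pderivj m j)^[n] (F i) := by
  induction n generalizing F with
  | zero => simp
  | succ n ih =>
    rw [Function.iterate_succ_apply, Dsum j t F fun i hi => (h i hi).differentiable (by simp),
      ih _ fun i hi => smoothD j (h i hi)]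
    simp [Function.iterate_succ_apply]

lemma Diter_smul {m : ℕ} (j : Fin m) (n : ℕ) (c : ℂ) {f : (Fin m → ℝ) → ℂ}
    (hf : ContDiff ℝ (⊤ : ℕ∞) f) :
    (pderivj m j)^[n] (c • f) = c • (pderivj m j)^[n] f := by
  induction n generalizing f with
  | zero => simp
  | succ n ih =>
    rw [Function.iterate_succ_apply, Dsmul j c (hf.differentiable (by simp)),
      ih (smoothD j hf), Function.iterate_succ_apply]

lemma iterLeibniz {m : ℕ} (j : Fin m) (n : ℕ) {f g : (Fin m → ℝ) → ℂ}
    (hf : ContDiff ℝ (⊤ : ℕ∞) f) (hg : ContDiff ℝ (⊤ : ℕ∞) g) :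
    (pderivj m j)^[n] (f * g) =
      ∑ i ∈ Finset.range (n + 1),
        ((n.choose i : ℂ)) • ((pderivj m j)^[i] f * (pderivj m j)^[n - i] g) := by
  induction n with
  | zero => simp
  | succ n ih =>
    have hA : ∀ i : ℕ, ContDiff ℝ (⊤ : ℕ∞) ((pderivj m j)^[i] f) := fun i => smoothDiter j i hf
    have hB : ∀ i : ℕ, ContDiff ℝ (⊤ : ℕ∞) ((pderivj m j)^[i] g) := fun i => smoothDiter j i hg
    have hAB : ∀ i : ℕ, ContDiff ℝ (⊤ : ℕ∞)
        ((pderivj m j)^[i] f * (pderivj m j)^[n - i] g) := by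
      intro i
      have := (hA i).mul (hB (n - i))
      exact this
    have hsm : ∀ i : ℕ, ContDiff ℝ (⊤ : ℕ∞)
        (((n.choose i : ℂ)) • ((pderivj m j)^[i] f * (pderivj m j)^[n - i] g)) :=
      fun i => by exact (hAB i).const_smul ((n.choose i : ℂ))
    rw [Function.iterate_succ_apply', ih,
      Dsum j _ _ (fun i _ => ((hsm i).differentiable (by simp)))]
    have step : ∀ i ∈ Finset.range (n + 1),
        pderivj m j ((n.choose i : ℂ) • ((pderivj m j)^[i] f * (pderivj m j)^[n - i] g)) =
        (n.choose i : ℂ) • ((pderivj m j)^[i] f * (pderivj m j)^[n + 1 - i] g)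
        + (n.choose i : ℂ) • ((pderivj m j)^[i + 1] f * (pderivj m j)^[n - i] g) := by
      intro i hi
      have hi' : i ≤ n := Nat.lt_succ_iff.mp (Finset.mem_range.mp hi)
      have hd1 : Differentiable ℝ ((pderivj m j)^[i] f) := (hA i).differentiable (by simp)
      have hd2 : Differentiable ℝ ((pderivj m j)^[n - i] g) := (hB (n-i)).differentiable (by simp)
      have hdm : Differentiable ℝ ((pderivj m j)^[i] f * (pderivj m j)^[n - i] g) :=
        (hAB i).differentiable (by simp)
      rw [Dsmul j _ hdm, Dmul j hd1 hd2, smul_add]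
      have e1 : n + 1 - i = (n - i) + 1 := by omega
      rw [e1, Function.iterate_succ_apply' (pderivj m j) (n - i) g,
        Function.iterate_succ_apply' (pderivj m j) i f]
      congr 1
      rw [mul_comm]
    rw [Finset.sum_congr rfl step, Finset.sum_add_distrib]
    have rhs : ∑ i ∈ Finset.range (n + 2),
        (((n+1).choose i : ℂ)) • ((pderivj m j)^[i] f * (pderivj m j)^[n + 1 - i] g)
        = ∑ i ∈ Finset.range (n + 1),
            (((n+1).choose (i+1) : ℂ)) • ((pderivj m j)^[i+1] f * (pderivj m j)^[n - i] g)
          + (f * (pderivj m j)^[n + 1] g) := by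
      rw [Finset.sum_range_succ' _ (n+1)]
      simp only [Nat.choose_zero_right, Nat.cast_one, one_smul, Function.iterate_zero_apply,
        Nat.sub_zero, Nat.succ_sub_succ_eq_sub]
    rw [rhs]
    have pascal : ∀ i ∈ Finset.range (n+1),
        (((n+1).choose (i+1) : ℂ)) • ((pderivj m j)^[i+1] f * (pderivj m j)^[n - i] g)
        = ((n.choose i : ℂ)) • ((pderivj m j)^[i+1] f * (pderivj m j)^[n - i] g)
        + ((n.choose (i+1) : ℂ)) • ((pderivj m j)^[i+1] f * (pderivj m j)^[n - i] g) := by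
      intro i _
      have hc : (((n+1).choose (i+1) : ℂ)) = (n.choose i : ℂ) + (n.choose (i+1) : ℂ) := by
        rw [Nat.choose_succ_succ]; push_cast; ring
      rw [hc, add_smul]
    rw [Finset.sum_congr rfl pascal, Finset.sum_add_distrib]
    have second : ∑ i ∈ Finset.range (n + 1),
        ((n.choose (i+1) : ℂ)) • ((pderivj m j)^[i+1] f * (pderivj m j)^[n - i] g)
        + (f * (pderivj m j)^[n + 1] g)
        = ∑ i ∈ Finset.range (n + 1),
        ((n.choose i : ℂ)) • ((pderivj m j)^[i] f * (pderivj m j)^[n + 1 - i] g) := by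
      rw [Finset.sum_range_succ' (fun i => ((n.choose i : ℂ)) •
        ((pderivj m j)^[i] f * (pderivj m j)^[n + 1 - i] g)) n]
      simp only [Nat.choose_zero_right, Nat.cast_one, one_smul, Function.iterate_zero_apply,
        Nat.sub_zero, Nat.succ_sub_succ_eq_sub]
      congr 1
      rw [Finset.sum_range_succ]
      simp only [Nat.choose_succ_self, Nat.cast_zero, zero_smul, add_zero]
    rw [add_assoc, second, add_comm]

noncomputable def Dlist (m : ℕ) (l : List (Fin m)) (α : Fin m → ℕ)
    (f : (Fin m → ℝ) → ℂ) : (Fin m → ℝ) → ℂ :=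
  (l.map fun j => (pderivj m j)^[α j]).foldr (· ∘ ·) id f

lemma Dlist_nil {m : ℕ} (α : Fin m → ℕ) (f : (Fin m → ℝ) → ℂ) : Dlist m [] α f = f := rfl

lemma Dlist_cons {m : ℕ} (j : Fin m) (l : List (Fin m)) (α : Fin m → ℕ)
    (f : (Fin m → ℝ) → ℂ) : Dlist m (j :: l) α f = (pderivj m j)^[α j] (Dlist m l α f) := rfl

lemma Dlist_smooth {m : ℕ} (l : List (Fin m)) (α : Fin m → ℕ) {f : (Fin m → ℝ) → ℂ}
    (hf : ContDiff ℝ (⊤ : ℕ∞) f) : ContDiff ℝ (⊤ : ℕ∞) (Dlist m l α f) := by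
  induction l with
  | nil => exact hf
  | cons j l ih => rw [Dlist_cons]; exact smoothDiter j (α j) ih

lemma Dlist_congr {m : ℕ} (l : List (Fin m)) {α β : Fin m → ℕ} (f : (Fin m → ℝ) → ℂ)
    (h : ∀ j ∈ l, α j = β j) : Dlist m l α f = Dlist m l β f := by
  induction l with
  | nil => rfl
  | cons j l ih =>
    rw [Dlist_cons, Dlist_cons, h j (List.mem_cons_self),
      ih fun j' hj' => h j' (List.mem_cons_of_mem j hj')]

lemma multiLeibniz {m : ℕ} (l : List (Fin m)) (hl : l.Nodup) (μ : Fin m → ℕ)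
    (hμ0 : ∀ j, j ∉ l → μ j = 0) {f g : (Fin m → ℝ) → ℂ}
    (hf : ContDiff ℝ (⊤ : ℕ∞) f) (hg : ContDiff ℝ (⊤ : ℕ∞) g) :
    Dlist m l μ (f * g) =
      ∑ β ∈ Fintype.piFinset (fun j => Finset.range (μ j + 1)),
        ((∏ j, (μ j).choose (β j) : ℕ) : ℂ) • (Dlist m l β f * Dlist m l (μ - β) g) := by
  induction l generalizing μ with
  | nil =>
    have hμ : μ = 0 := funext fun j => hμ0 j (List.not_mem_nil)
    subst hμ
    have hbox : Fintype.piFinset (fun j : Fin m => Finset.range ((0:Fin m → ℕ) j + 1))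
        = {(0 : Fin m → ℕ)} := by
      ext β
      simp [Fintype.mem_piFinset, funext_iff, Nat.lt_one_iff]
    rw [hbox, Finset.sum_singleton]
    simp [Dlist_nil]
  | cons j0 l' ih =>
    have hj0 : j0 ∉ l' := (List.nodup_cons.mp hl).1
    have hl' : l'.Nodup := (List.nodup_cons.mp hl).2
    set n := μ j0 with hn
    set μ' : Fin m → ℕ := Function.update μ j0 0 with hμ'
    have hμ'0 : ∀ j, j ∉ l' → μ' j = 0 := by
      intro j hj
      by_cases h : j = j0
      · subst h; simp [hμ']
      · rw [hμ', Function.update_of_ne h]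
        exact hμ0 j (by simp [List.mem_cons, h, hj])
    have hμ'j0 : μ' j0 = 0 := by simp [hμ']
    have hμup : Function.update μ' j0 n = μ := by
      funext j
      by_cases h : j = j0
      · subst h; simp [Function.update_self, hn]
      · rw [Function.update_of_ne h, hμ', Function.update_of_ne h]
    -- LHS
    have hfg : ContDiff ℝ (⊤ : ℕ∞) (f * g) := hf.mul hg
    rw [Dlist_cons,
      Dlist_congr l' (f * g) (fun j hj => show μ j = μ' j by
        rw [hμ', Function.update_of_ne (fun h => hj0 (by subst h; exact hj))]),
      ih hl' μ' hμ'0]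
    -- push (D j0)^[n] inside
    have hmulβ : ∀ β : Fin m → ℕ, ContDiff ℝ (⊤ : ℕ∞) (Dlist m l' β f * Dlist m l' (μ' - β) g) :=
      fun β => by exact (Dlist_smooth l' β hf).mul (Dlist_smooth l' (μ' - β) hg)
    have hsummand : ∀ β : Fin m → ℕ, ContDiff ℝ (⊤ : ℕ∞)
        (((∏ j, (μ' j).choose (β j) : ℕ) : ℂ) • (Dlist m l' β f * Dlist m l' (μ' - β) g)) :=
      fun β => by
        exact (hmulβ β).const_smul
          ((∏ j, (μ' j).choose (β j) : ℕ) : ℂ)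
    rw [Diter_sum j0 n _ _ (fun β _ => hsummand β)]
    have hterm : ∀ β ∈ Fintype.piFinset (fun j => Finset.range (μ' j + 1)),
        (pderivj m j0)^[n]
          (((∏ j, (μ' j).choose (β j) : ℕ) : ℂ) • (Dlist m l' β f * Dlist m l' (μ' - β) g))
        = ∑ i ∈ Finset.range (n + 1),
            (((∏ j, (μ' j).choose (β j) : ℕ) : ℂ) * (n.choose i : ℂ)) •
              ((pderivj m j0)^[i] (Dlist m l' β f) *
                (pderivj m j0)^[n - i] (Dlist m l' (μ' - β) g)) := by
      intro β _
      rw [Diter_smul j0 n _ (hmulβ β),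
        iterLeibniz j0 n (Dlist_smooth l' β hf) (Dlist_smooth l' (μ' - β) hg),
        Finset.smul_sum]
      exact Finset.sum_congr rfl fun i _ => smul_smul _ _ _
    rw [Finset.sum_congr rfl hterm, ← Finset.sum_product']
    -- reindex
    refine Finset.sum_nbij' (fun p => Function.update p.1 j0 p.2)
      (fun γ => (Function.update γ j0 0, γ j0)) ?_ ?_ ?_ ?_ ?_
    · rintro ⟨β, i⟩ hp
      rw [Finset.mem_product] at hp
      obtain ⟨hβ, hi⟩ := hp
      dsimp only at hβ hi ⊢
      rw [Fintype.mem_piFinset] at hβ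
      rw [Fintype.mem_piFinset]
      intro j
      by_cases h : j = j0
      · subst h; simpa [Function.update_self, ← hn] using hi
      · rw [Function.update_of_ne h]
        have := hβ j
        rwa [hμ', Function.update_of_ne h] at this
    · intro γ hγ
      rw [Fintype.mem_piFinset] at hγ
      rw [Finset.mem_product]
      refine ⟨?_, ?_⟩
      · dsimp only
        rw [Fintype.mem_piFinset]
        intro j
        by_cases h : j = j0
        · subst h; simp [Function.update_self, hμ'j0]
        · rw [Function.update_of_ne h, hμ', Function.update_of_ne h]
          exact hγ j
      · dsimp only
        simpa [← hn] using hγ j0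
    · rintro ⟨β, i⟩ hp
      rw [Finset.mem_product] at hp
      have hβ0 : β j0 = 0 := by
        have := (Fintype.mem_piFinset.mp hp.1) j0
        simpa [hμ'j0, Nat.lt_one_iff] using this
      dsimp only
      have h1 : Function.update (Function.update β j0 i) j0 0 = β := by
        funext j
        by_cases h : j = j0
        · subst h; simp [Function.update_self, hβ0]
        · simp [Function.update_of_ne h]
      have h2 : Function.update β j0 i j0 = i := Function.update_self _ _ _
      rw [h1, h2]
    · intro γ hγ
      dsimp only
      funext j
      by_cases h : j = j0
      · subst h; simp [Function.update_self]
      · simp [Function.update_of_ne h]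
    · rintro ⟨β, i⟩ hp
      rw [Finset.mem_product] at hp
      obtain ⟨hβ, hi⟩ := hp
      dsimp only at hβ hi ⊢
      rw [Fintype.mem_piFinset] at hβ
      have hβ0 : β j0 = 0 := by
        have := hβ j0
        simpa [hμ'j0, Nat.lt_one_iff] using this
      set γ := Function.update β j0 i with hγdef
      -- coefficient equality
      have hcoeff : (∏ j, (μ j).choose (γ j)) = n.choose i * ∏ j, (μ' j).choose (β j) := by
        have h1 : (fun j => (μ j).choose (γ j))
            = Function.update (fun j => (μ' j).choose (β j)) j0 (n.choose i) := by
          funext j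
          by_cases h : j = j0
          · subst h
            simp [Function.update_self, hγdef, ← hn]
          · rw [Function.update_of_ne h, hγdef, Function.update_of_ne h, ← hμup,
              Function.update_of_ne h]
        rw [h1, Finset.prod_update_of_mem (Finset.mem_univ j0)]
        congr 1
        rw [← Finset.mul_prod_erase Finset.univ _ (Finset.mem_univ j0), hμ'j0, hβ0]
        simp [Finset.erase_eq]
      -- Dlist equalities
      have hD1 : Dlist m (j0 :: l') γ f = (pderivj m j0)^[i] (Dlist m l' β f) := by
        rw [Dlist_cons]
        have : γ j0 = i := by rw [hγdef]; simp [Function.update_self]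
        rw [this, Dlist_congr l' f (fun j hj => show γ j = β j by
          rw [hγdef, Function.update_of_ne (fun h => hj0 (by subst h; exact hj))])]
      have hD2 : Dlist m (j0 :: l') (μ - γ) g
          = (pderivj m j0)^[n - i] (Dlist m l' (μ' - β) g) := by
        rw [Dlist_cons]
        have h2 : (μ - γ) j0 = n - i := by
          simp [Pi.sub_apply, hγdef, Function.update_self, ← hn]
        rw [h2, Dlist_congr l' g (fun j hj => show (μ - γ) j = (μ' - β) j by
          have hne : j ≠ j0 := fun h => hj0 (by subst h; exact hj)
          simp [Pi.sub_apply, hγdef, Function.update_of_ne hne, ← hμup])]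
      rw [hD1, hD2, hcoeff]
      push_cast
      rw [mul_comm ((n.choose i : ℂ)) _]


lemma mpderiv_eq_Dlist {m : ℕ} (α : Fin m → ℕ) (f : (Fin m → ℝ) → ℂ) :
    mpderiv m α f = Dlist m (List.finRange m) α f := by
  unfold mpderiv Dlist
  rw [List.ofFn_eq_map]

lemma mpderiv_mul {m : ℕ} (α : Fin m → ℕ) {f g : (Fin m → ℝ) → ℂ}
    (hf : ContDiff ℝ (⊤ : ℕ∞) f) (hg : ContDiff ℝ (⊤ : ℕ∞) g) :
    mpderiv m α (f * g) =
      ∑ β ∈ Fintype.piFinset (fun j => Finset.range (α j + 1)),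
        ((∏ j, (α j).choose (β j) : ℕ) : ℂ) • (mpderiv m β f * mpderiv m (α - β) g) := by
  rw [mpderiv_eq_Dlist,
    multiLeibniz (List.finRange m) (List.nodup_finRange m) α
      (fun j hj => absurd (List.mem_finRange j) hj) hf hg]
  exact Finset.sum_congr rfl fun β _ => by rw [mpderiv_eq_Dlist, mpderiv_eq_Dlist]

lemma sum_choose_shift (k' a : ℕ) :
    ∑ b ∈ Finset.range (a + 1), (b + k').choose b = (a + k' + 1).choose a := by
  induction a with
  | zero => simp
  | succ a ih =>
    rw [Finset.sum_range_succ, ih,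
      show a + 1 + k' + 1 = (a + k' + 1) + 1 from by omega,
      show a + 1 + k' = a + k' + 1 from by omega]
    conv_rhs => rw [Nat.choose_succ_succ]

lemma one_dim {s : ℝ} (hs : 1 ≤ s) {C : ℝ} (hC : 0 ≤ C) {k : ℕ} (hk : 0 < k) (a : ℕ) :
    ∑ b ∈ Finset.range (a + 1),
      C ^ a * ((a.choose b : ℝ) * (((b + k - 1).choose b : ℝ)) *
        ((b.factorial : ℝ)) ^ s * (((a - b).factorial : ℝ)) ^ s)
      ≤ C ^ a * (((a + k).choose a : ℝ)) * ((a.factorial : ℝ)) ^ s := by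
  have key : ∀ b ∈ Finset.range (a + 1),
      C ^ a * ((a.choose b : ℝ) * (((b + k - 1).choose b : ℝ)) *
        ((b.factorial : ℝ)) ^ s * (((a - b).factorial : ℝ)) ^ s)
      ≤ C ^ a * ((((b + k - 1).choose b : ℝ)) * ((a.factorial : ℝ)) ^ s) := by
    intro b hb
    have hba : b ≤ a := Nat.lt_succ_iff.mp (Finset.mem_range.mp hb)
    have hfac : (a.choose b : ℝ) * ((b.factorial : ℝ)) ^ s * ((a - b).factorial : ℝ) ^ s
        ≤ ((a.factorial : ℝ)) ^ s := by
      have hmul : ((b.factorial : ℝ)) ^ s * (((a - b).factorial : ℝ)) ^ s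
          = ((b.factorial * (a - b).factorial : ℕ) : ℝ) ^ s := by
        push_cast
        rw [← Real.mul_rpow (by positivity) (by positivity)]
      rw [mul_assoc, hmul]
      have hN : (1 : ℝ) ≤ (a.choose b : ℝ) := by
        exact_mod_cast Nat.choose_pos hba
      calc (a.choose b : ℝ) * ((b.factorial * (a - b).factorial : ℕ) : ℝ) ^ s
          ≤ (a.choose b : ℝ) ^ s * ((b.factorial * (a - b).factorial : ℕ) : ℝ) ^ s := by
            apply mul_le_mul_of_nonneg_right _ (by positivity)
            calc (a.choose b : ℝ) = (a.choose b : ℝ) ^ (1 : ℝ) := (Real.rpow_one _).symm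
              _ ≤ (a.choose b : ℝ) ^ s := Real.rpow_le_rpow_of_exponent_le hN hs
        _ = ((a.choose b : ℝ) * ((b.factorial * (a - b).factorial : ℕ) : ℝ)) ^ s := by
            rw [← Real.mul_rpow (by positivity) (by positivity)]
        _ = ((a.factorial : ℝ)) ^ s := by
            congr 1
            have := Nat.choose_mul_factorial_mul_factorial hba
            push_cast [← this]
            ring
    calc C ^ a * ((a.choose b : ℝ) * (((b + k - 1).choose b : ℝ)) *
          ((b.factorial : ℝ)) ^ s * (((a - b).factorial : ℝ)) ^ s)
        = C ^ a * ((((b + k - 1).choose b : ℝ)) *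
            ((a.choose b : ℝ) * ((b.factorial : ℝ)) ^ s * (((a - b).factorial : ℝ)) ^ s)) := by
          ring
      _ ≤ C ^ a * ((((b + k - 1).choose b : ℝ)) * ((a.factorial : ℝ)) ^ s) := by
          apply mul_le_mul_of_nonneg_left _ (by positivity)
          exact mul_le_mul_of_nonneg_left hfac (by positivity)
  calc ∑ b ∈ Finset.range (a + 1),
        C ^ a * ((a.choose b : ℝ) * (((b + k - 1).choose b : ℝ)) *
          ((b.factorial : ℝ)) ^ s * (((a - b).factorial : ℝ)) ^ s)
      ≤ ∑ b ∈ Finset.range (a + 1),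
          C ^ a * ((((b + k - 1).choose b : ℝ)) * ((a.factorial : ℝ)) ^ s) :=
        Finset.sum_le_sum key
    _ = C ^ a * (((a + k).choose a : ℝ)) * ((a.factorial : ℝ)) ^ s := by
        rw [← Finset.mul_sum, ← Finset.sum_mul]
        have : ∑ b ∈ Finset.range (a + 1), ((b + k - 1).choose b : ℝ)
            = (((a + k).choose a : ℝ)) := by
          have hnat : ∑ b ∈ Finset.range (a + 1), (b + k - 1).choose b = (a + k).choose a := by
            have : ∀ b, b + k - 1 = b + (k - 1) := fun b => by omega
            simp_rw [this]
            rw [sum_choose_shift (k - 1) a, show a + (k - 1) + 1 = a + k from by omega]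
          exact_mod_cast congrArg (Nat.cast : ℕ → ℝ) hnat
        rw [this, mul_assoc]


/-- if `|f| ≤ 1` on `K` and `|∂^α f| ≤ C^{|α|} (α!)^s` on `K` for all
multi-indices `α` (Gevrey class `G^s` with constant `C`), then
`|∂^α (f^k)| ≤ C^{|α|}·binom(α+k−1, α)·(α!)^s` on `K`. -/
theorem gevrey_power_estimate (m : ℕ) (s : ℝ) (hs : 1 ≤ s)
    (K : Set (Fin m → ℝ)) (hK : IsCompact K)
    (f : (Fin m → ℝ) → ℂ) (hf : ContDiff ℝ (⊤ : ℕ∞) f)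
    (hf1 : ∀ x ∈ K, ‖f x‖ ≤ 1) (C : ℝ) (hC : 0 < C)
    (hGevrey : ∀ (α : Fin m → ℕ), ∀ x ∈ K,
      ‖mpderiv m α f x‖ ≤ C ^ (∑ j, α j) * ((∏ j, Nat.factorial (α j) : ℕ) : ℝ) ^ s) :
    ∀ k : ℕ, 0 < k → ∀ (α : Fin m → ℕ), ∀ x ∈ K,
      ‖mpderiv m α (f ^ k) x‖ ≤
        C ^ (∑ j, α j) * ((∏ j, Nat.choose (α j + k - 1) (α j) : ℕ) : ℝ) *
          ((∏ j, Nat.factorial (α j) : ℕ) : ℝ) ^ s := by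
  intro k hk
  induction k, hk using Nat.le_induction with
  | base =>
    intro α x hx
    have h1 : (∏ j, Nat.choose (α j + 1 - 1) (α j)) = 1 :=
      Finset.prod_eq_one fun j _ => by simp
    rw [pow_one, h1, Nat.cast_one, mul_one]
    exact hGevrey α x hx
  | succ k hk ih =>
    intro α x hx
    have hfk : ContDiff ℝ (⊤ : ℕ∞) (f ^ k) := by exact hf.pow k
    have hL := mpderiv_mul α hfk hf
    rw [pow_succ, hL, Finset.sum_apply]
    set t : Fin m → ℕ → ℝ := fun j b =>
      C ^ (α j) * (((α j).choose b : ℝ) * (((b + k - 1).choose b : ℝ)) *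
        ((b.factorial : ℝ)) ^ s * ((((α j - b).factorial : ℝ)) ^ s)) with ht
    have hidx : ∀ a : ℕ, a + (k + 1) - 1 = a + k := fun a => by omega
    calc ‖∑ β ∈ Fintype.piFinset (fun j => Finset.range (α j + 1)),
            (((∏ j, (α j).choose (β j) : ℕ) : ℂ) •
              (mpderiv m β (f ^ k) * mpderiv m (α - β) f)) x‖
        ≤ ∑ β ∈ Fintype.piFinset (fun j => Finset.range (α j + 1)),
            ((∏ j, (α j).choose (β j) : ℕ) : ℝ) *
              (‖mpderiv m β (f ^ k) x‖ * ‖mpderiv m (α - β) f x‖) := by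
          refine (norm_sum_le _ _).trans (le_of_eq (Finset.sum_congr rfl fun β _ => ?_))
          simp [norm_smul, mul_assoc]
      _ ≤ ∑ β ∈ Fintype.piFinset (fun j => Finset.range (α j + 1)), ∏ j, t j (β j) := by
          refine Finset.sum_le_sum fun β hβ => ?_
          have hb : ∀ j, β j ≤ α j := fun j =>
            Nat.lt_succ_iff.mp (Finset.mem_range.mp (Fintype.mem_piFinset.mp hβ j))
          have h1 := ih β x hx
          have h2 := hGevrey (α - β) x hx
          simp only [Pi.sub_apply] at h2
          have hB1 : (0 : ℝ) ≤ C ^ (∑ j, β j) *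
              ((∏ j, Nat.choose (β j + k - 1) (β j) : ℕ) : ℝ) *
              ((∏ j, Nat.factorial (β j) : ℕ) : ℝ) ^ s := by positivity
          have step : ((∏ j, (α j).choose (β j) : ℕ) : ℝ) *
              (‖mpderiv m β (f ^ k) x‖ * ‖mpderiv m (α - β) f x‖)
              ≤ ((∏ j, (α j).choose (β j) : ℕ) : ℝ) *
                ((C ^ (∑ j, β j) * ((∏ j, Nat.choose (β j + k - 1) (β j) : ℕ) : ℝ) *
                  ((∏ j, Nat.factorial (β j) : ℕ) : ℝ) ^ s) *
                 (C ^ (∑ j, (α j - β j)) *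
                  ((∏ j, Nat.factorial (α j - β j) : ℕ) : ℝ) ^ s)) := by
            apply mul_le_mul_of_nonneg_left _ (by positivity)
            exact mul_le_mul h1 h2 (norm_nonneg _) hB1
          refine step.trans (le_of_eq ?_)
          push_cast
          rw [← Finset.prod_pow_eq_pow_sum, ← Finset.prod_pow_eq_pow_sum,
            ← Real.finset_prod_rpow _ _ (fun i _ => by positivity) s,
            ← Real.finset_prod_rpow _ _ (fun i _ => by positivity) s,
            ← Finset.prod_mul_distrib, ← Finset.prod_mul_distrib,
            ← Finset.prod_mul_distrib, ← Finset.prod_mul_distrib,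
            ← Finset.prod_mul_distrib]
          refine Finset.prod_congr rfl fun j _ => ?_
          have hCpow : C ^ (β j) * C ^ (α j - β j) = C ^ (α j) := by
            rw [← pow_add, Nat.add_sub_cancel' (hb j)]
          show _ = C ^ (α j) * (((α j).choose (β j) : ℝ) * (((β j + k - 1).choose (β j) : ℝ)) *
            (((β j).factorial : ℝ)) ^ s * ((((α j - β j).factorial : ℝ)) ^ s))
          rw [← hCpow]
          ring
      _ = ∏ j, ∑ b ∈ Finset.range (α j + 1), t j b := (Finset.prod_univ_sum _ _).symm
      _ ≤ ∏ j, (C ^ (α j) * (((α j + k).choose (α j) : ℝ)) * (((α j).factorial : ℝ)) ^ s) := by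
          refine Finset.prod_le_prod (fun j _ => Finset.sum_nonneg fun b _ => ?_)
            (fun j _ => ?_)
          · rw [ht]; positivity
          · exact one_dim hs hC.le hk (α j)
      _ = C ^ (∑ j, α j) * ((∏ j, Nat.choose (α j + (k + 1) - 1) (α j) : ℕ) : ℝ) *
            ((∏ j, Nat.factorial (α j) : ℕ) : ℝ) ^ s := by
          simp_rw [hidx]
          push_cast
          rw [← Finset.prod_pow_eq_pow_sum,
            ← Real.finset_prod_rpow _ _ (fun i _ => by positivity) s,
            ← Finset.prod_mul_distrib, ← Finset.prod_mul_distrib]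
end

section
/- Let X ⊂ C^n be compact with K-dim X = s < n. Then for every h with 1 < h < n/s and every sufficiently large integer N, there exists a nonzero polynomial P ∈ Z[z_1,...,z_n] of degree at most N, with integer coefficients bounded in absolute value by exp(N^h), such that sup_{z ∈ X} |P(z)| < exp(−N^h). -/
/-- `D` is a bounded domain in `ℂⁿ`: open, connected and bounded. -/
def IsBoundedDomain (n : ℕ) (D : Set (Fin n → ℂ)) : Prop :=
  IsOpen D ∧ IsConnected D ∧ Bornology.IsBounded D

/-- The set `A_X^D` of functions holomorphic on `D` and bounded by `1` there, regarded
through their traces on `X`: `N_ε(A_X^D)` is the minimal cardinality of a family of sets of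
functions, each of diameter `≤ 2ε` in the uniform metric on `X`, covering all such functions. -/
noncomputable def traceCoverNum (n : ℕ) (D X : Set (Fin n → ℂ)) (ε : ℝ) : ℕ :=
  sInf {N | ∃ C : Finset (Set ((Fin n → ℂ) → ℂ)), C.card = N ∧
    (∀ s ∈ C, ∀ F ∈ s, ∀ G ∈ s, ∀ z ∈ X, dist (F z) (G z) ≤ 2 * ε) ∧
    ∀ F : (Fin n → ℂ) → ℂ, DifferentiableOn ℂ F D → (∀ z ∈ D, ‖F z‖ ≤ 1) →
      ∃ s ∈ C, F ∈ s}

/-- The ε-entropy `H_ε(A_X^D)`. -/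
noncomputable def traceEntropy (n : ℕ) (D X : Set (Fin n → ℂ)) (ε : ℝ) : ℝ :=
  Real.log (traceCoverNum n D X ε)

/-- `Ψ(X,D) = limsup_{ε→0⁺} (log H_ε(A_X^D))/(log log (1/ε)) − 1`. -/
noncomputable def Psi (n : ℕ) (X D : Set (Fin n → ℂ)) : ℝ :=
  Filter.limsup
    (fun ε : ℝ => Real.log (traceEntropy n D X ε) / Real.log (Real.log (1 / ε)))
    (nhdsWithin 0 (Set.Ioi 0)) - 1

/-- The Kolmogorov dimension of a compact `X ⊆ ℂⁿ`: `Ψ(X,D)` computed for a canonical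
bounded domain containing `X` (a ball); by Theorem `thm:indep` this is independent of the
choice of bounded domain. -/
noncomputable def KDim (n : ℕ) (X : Set (Fin n → ℂ)) : ℝ :=
  Psi n X (Metric.ball 0 (sSup (norm '' X) + 1))

/-!
Dirichlet's pigeonhole argument. Put `K = ⌊N/n⌋`, `H = ⌊exp N^h⌋` and `ε = exp(-3N^h)`. The
`(H+1)^((K+1)^n)` polynomials `∑_{σ ∈ {0,…,K}ⁿ} a_σ z^σ` with `a_σ ∈ {0,…,H}`, divided by a
common bound `B` of their moduli on the ball `D`, belong to `A_X^D`. Since `K-dim X = s`, for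
any `c > s + 1` and small `ε` an `ε`-cover of `A_X^D` needs at most
`exp((log 1/ε)^c) = exp(3^c N^{hc})` sets, and taking `c < n/h + 1` makes this fewer than the
`(H+1)^((K+1)^n) ≥ exp(N^{n+h}/n^n)` polynomials. Two of them therefore share a covering set,
so their difference `P` is a nonzero integer polynomial with `|P| ≤ 2εB < exp(-N^h)` on `X`.
-/
open Filter Topology Real MvPolynomial

def IsTraceCover (n : ℕ) (D X : Set (Fin n → ℂ)) (ε : ℝ)
    (C : Finset (Set ((Fin n → ℂ) → ℂ))) : Prop :=
  (∀ s ∈ C, ∀ F ∈ s, ∀ G ∈ s, ∀ z ∈ X, dist (F z) (G z) ≤ 2 * ε) ∧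
    ∀ F : (Fin n → ℂ) → ℂ, DifferentiableOn ℂ F D → (∀ z ∈ D, ‖F z‖ ≤ 1) → ∃ s ∈ C, F ∈ s

noncomputable def entropyRatio (n : ℕ) (D X : Set (Fin n → ℂ)) (ε : ℝ) : ℝ :=
  log (traceEntropy n D X ε) / log (log (1 / ε))

section TraceCover

variable {n : ℕ} {D X : Set (Fin n → ℂ)} {ε : ℝ}

lemma Psi_eq_limsup_entropyRatio :
    Psi n X D = limsup (entropyRatio n D X) (𝓝[>] 0) - 1 :=
  rfl

lemma IsTraceCover.mono {ε' : ℝ} {C : Finset (Set ((Fin n → ℂ) → ℂ))}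
    (hC : IsTraceCover n D X ε C) (hε : ε ≤ ε') : IsTraceCover n D X ε' C :=
  ⟨fun s hs F hF G hG z hz => (hC.1 s hs F hF G hG z hz).trans (by linarith), hC.2⟩

lemma IsTraceCover.exists_ne_dist_le {C : Finset (Set ((Fin n → ℂ) → ℂ))}
    (hC : IsTraceCover n D X ε C) {ι : Type*} [Fintype ι] (F : ι → (Fin n → ℂ) → ℂ)
    (hF : ∀ i, DifferentiableOn ℂ (F i) D) (hF_le : ∀ i, ∀ z ∈ D, ‖F i z‖ ≤ 1)
    (hcard : C.card < Fintype.card ι) :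
    ∃ i j, i ≠ j ∧ ∀ z ∈ X, dist (F i z) (F j z) ≤ 2 * ε := by
  choose s hsC hFs using fun i => hC.2 (F i) (hF i) (hF_le i)
  obtain ⟨i, j, hij, hs⟩ :=
    Fintype.exists_ne_map_eq_of_card_lt (fun i => (⟨s i, hsC i⟩ : C)) (by simpa using hcard)
  have hFj : F j ∈ s i := by
    rw [show s i = s j from congrArg Subtype.val hs]
    exact hFs j
  exact ⟨i, j, hij, hC.1 (s i) (hsC i) _ (hFs i) _ hFj⟩

lemma traceCoverNum_eq :
    traceCoverNum n D X ε = sInf {N | ∃ C, C.card = N ∧ IsTraceCover n D X ε C} :=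
  rfl

lemma exists_isTraceCover_card_eq (h : ∃ C, IsTraceCover n D X ε C) :
    ∃ C, IsTraceCover n D X ε C ∧ C.card = traceCoverNum n D X ε := by
  obtain ⟨C, hC⟩ := h
  obtain ⟨C', hcard, hC'⟩ := Nat.sInf_mem (⟨_, C, rfl, hC⟩ :
    {N | ∃ C, C.card = N ∧ IsTraceCover n D X ε C}.Nonempty)
  exact ⟨C', hC', hcard⟩

lemma traceCoverNum_le_exp_traceEntropy :
    (traceCoverNum n D X ε : ℝ) ≤ exp (traceEntropy n D X ε) := by
  rcases (Nat.cast_nonneg (traceCoverNum n D X ε) : (0 : ℝ) ≤ _).eq_or_lt with h | h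
  · rw [← h]; exact (exp_pos _).le
  · rw [traceEntropy, exp_log h]

/- `traceCoverNum` is `0` when no finite cover exists, and `limsup` is `0` for a function that is
not bounded above: both degenerate cases give the junk value `Psi = -1`. -/
lemma Psi_eq_neg_one_of_not_isBoundedUnder
    (h : ¬IsBoundedUnder (· ≤ ·) (𝓝[>] 0) (entropyRatio n D X)) : Psi n X D = -1 := by
  have hempty : {a : ℝ | ∀ᶠ ε in 𝓝[>] 0, entropyRatio n D X ε ≤ a} = ∅ :=
    Set.eq_empty_of_forall_notMem fun a ha => h ⟨a, ha⟩
  rw [Psi_eq_limsup_entropyRatio, limsup_eq, hempty, Real.sInf_empty, zero_sub]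

lemma Psi_eq_neg_one_of_not_exists_isTraceCover {ε₀ : ℝ} (hε₀ : 0 < ε₀)
    (h : ¬∃ C, IsTraceCover n D X ε₀ C) : Psi n X D = -1 := by
  have hzero : ∀ᶠ ε in 𝓝[>] 0, entropyRatio n D X ε = 0 := by
    filter_upwards [Ioo_mem_nhdsGT hε₀] with ε hε
    have hN : traceCoverNum n D X ε = 0 := by
      have hempty : {N | ∃ C, C.card = N ∧ IsTraceCover n D X ε C} = ∅ :=
        Set.eq_empty_of_forall_notMem fun _ ⟨C, _, hC⟩ => h ⟨C, hC.mono hε.2.le⟩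
      rw [traceCoverNum_eq, hempty, Nat.sInf_empty]
    simp [entropyRatio, traceEntropy, hN]
  rw [Psi_eq_limsup_entropyRatio, limsup_congr hzero, limsup_const, zero_sub]

lemma exists_isTraceCover_of_Psi_ne (hΨ : Psi n X D ≠ -1) (hε : 0 < ε) :
    ∃ C, IsTraceCover n D X ε C ∧ C.card = traceCoverNum n D X ε :=
  exists_isTraceCover_card_eq <| by
    by_contra h
    exact hΨ (Psi_eq_neg_one_of_not_exists_isTraceCover hε h)

lemma eventually_traceCoverNum_le {c : ℝ} (hΨ : Psi n X D ≠ -1) (hc : Psi n X D + 1 < c) :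
    ∀ᶠ ε in 𝓝[>] 0, (traceCoverNum n D X ε : ℝ) ≤ exp (log (1 / ε) ^ c) := by
  have hbdd : IsBoundedUnder (· ≤ ·) (𝓝[>] 0) (entropyRatio n D X) := by
    by_contra hb
    exact hΨ (Psi_eq_neg_one_of_not_isBoundedUnder hb)
  have hlim : ∀ᶠ ε in 𝓝[>] 0, entropyRatio n D X ε < c :=
    eventually_lt_of_limsup_lt (by rw [Psi_eq_limsup_entropyRatio] at hc; linarith) hbdd
  filter_upwards [hlim, Ioo_mem_nhdsGT (exp_pos (-1))] with ε hε ⟨hε0, hε1⟩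
  have hL : 1 < log (1 / ε) := by
    rw [lt_log_iff_exp_lt (by positivity), one_div, lt_inv_comm₀ (exp_pos 1) hε0, ← exp_neg]
    exact hε1
  refine traceCoverNum_le_exp_traceEntropy.trans (exp_le_exp.2 ?_)
  rcases le_or_gt (traceEntropy n D X ε) 0 with hH | hH
  · exact hH.trans (rpow_nonneg (by linarith) c)
  · rw [entropyRatio, div_lt_iff₀ (log_pos hL)] at hε
    rw [rpow_def_of_pos (by linarith), ← exp_log hH]
    exact exp_le_exp.2 (by linarith)

end TraceCover

noncomputable section BoxPolynomial

variable {n K : ℕ}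

def boxExponent (σ : Fin n → Fin (K + 1)) : Fin n →₀ ℕ :=
  Finsupp.equivFunOnFinite.symm fun i => σ i

lemma boxExponent_injective : Function.Injective (boxExponent (n := n) (K := K)) :=
  fun _ _ h => funext fun i => Fin.ext (DFunLike.congr_fun h i)

lemma degree_boxExponent_le (σ : Fin n → Fin (K + 1)) : (boxExponent σ).degree ≤ n * K := by
  rw [Finsupp.degree_eq_sum]
  calc ∑ i, boxExponent σ i ≤ ∑ _i : Fin n, K := Finset.sum_le_sum fun i _ => Fin.is_le (σ i)
    _ = n * K := by simp

def boxPoly (a : (Fin n → Fin (K + 1)) → ℤ) : MvPolynomial (Fin n) ℤ :=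
  ∑ σ, monomial (boxExponent σ) (a σ)

lemma boxPoly_sub (a b : (Fin n → Fin (K + 1)) → ℤ) :
    boxPoly (a - b) = boxPoly a - boxPoly b := by
  simp [boxPoly, Finset.sum_sub_distrib]

lemma coeff_boxPoly_boxExponent (a : (Fin n → Fin (K + 1)) → ℤ) (σ : Fin n → Fin (K + 1)) :
    (boxPoly a).coeff (boxExponent σ) = a σ := by
  rw [boxPoly, coeff_sum, Finset.sum_eq_single σ]
  · rw [coeff_monomial, if_pos rfl]
  · exact fun τ _ hτ => by rw [coeff_monomial, if_neg (boxExponent_injective.ne hτ)]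
  · exact fun h => (h (Finset.mem_univ σ)).elim

lemma coeff_boxPoly_of_notMem_range (a : (Fin n → Fin (K + 1)) → ℤ) {d : Fin n →₀ ℕ}
    (hd : d ∉ Set.range (boxExponent (K := K))) : (boxPoly a).coeff d = 0 := by
  rw [boxPoly, coeff_sum]
  exact Finset.sum_eq_zero fun σ _ => by rw [coeff_monomial, if_neg fun h => hd ⟨σ, h⟩]

lemma boxPoly_ne_zero {a : (Fin n → Fin (K + 1)) → ℤ} (ha : a ≠ 0) : boxPoly a ≠ 0 := by
  obtain ⟨σ, hσ⟩ := Function.ne_iff.1 ha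
  intro h
  exact hσ (by rw [← coeff_boxPoly_boxExponent a σ, h, coeff_zero]; rfl)

lemma abs_coeff_boxPoly_le {a : (Fin n → Fin (K + 1)) → ℤ} {A : ℤ} (hA : 0 ≤ A)
    (ha : ∀ σ, |a σ| ≤ A) (d : Fin n →₀ ℕ) : |(boxPoly a).coeff d| ≤ A := by
  by_cases hd : d ∈ Set.range (boxExponent (K := K))
  · obtain ⟨σ, rfl⟩ := hd
    rw [coeff_boxPoly_boxExponent]
    exact ha σ
  · rw [coeff_boxPoly_of_notMem_range a hd, abs_zero]
    exact hA

lemma totalDegree_boxPoly_le (a : (Fin n → Fin (K + 1)) → ℤ) :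
    (boxPoly a).totalDegree ≤ n * K :=
  (totalDegree_finsetSum _ _).trans <| Finset.sup_le fun σ _ =>
    (totalDegree_monomial_le _ _).trans (degree_boxExponent_le σ)

lemma norm_prod_pow_le (z : Fin n → ℂ) (d : Fin n →₀ ℕ) :
    ‖d.prod fun i k => z i ^ k‖ ≤ ‖z‖ ^ d.degree := by
  rw [Finsupp.prod_pow, norm_prod, Finsupp.degree_eq_sum, ← Finset.prod_pow_eq_pow_sum]
  exact Finset.prod_le_prod (fun i _ => by positivity)
    fun i _ => by rw [norm_pow]; exact pow_le_pow_left₀ (norm_nonneg _) (norm_le_pi_norm z i) _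

lemma norm_aeval_boxPoly_le {a : (Fin n → Fin (K + 1)) → ℤ} {A r : ℝ} (hr : 1 ≤ r)
    (ha : ∀ σ, |(a σ : ℝ)| ≤ A) {z : Fin n → ℂ} (hz : ‖z‖ ≤ r) :
    ‖aeval z (boxPoly a)‖ ≤ (K + 1) ^ n * A * r ^ (n * K) := by
  have hterm : ∀ σ, ‖aeval z (monomial (boxExponent σ) (a σ))‖ ≤ A * r ^ (n * K) := by
    intro σ
    rw [aeval_monomial, norm_mul, algebraMap_int_eq, eq_intCast, Complex.norm_intCast]
    refine mul_le_mul (ha σ) ((norm_prod_pow_le z _).trans ?_) (norm_nonneg _)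
      ((abs_nonneg _).trans (ha σ))
    calc ‖z‖ ^ (boxExponent σ).degree ≤ r ^ (boxExponent σ).degree :=
          pow_le_pow_left₀ (norm_nonneg _) hz _
      _ ≤ r ^ (n * K) := pow_le_pow_right₀ hr (degree_boxExponent_le σ)
  calc ‖aeval z (boxPoly a)‖ ≤ ∑ σ, ‖aeval z (monomial (boxExponent σ) (a σ))‖ := by
        rw [boxPoly, map_sum]
        exact norm_sum_le _ _
    _ ≤ ∑ _σ : Fin n → Fin (K + 1), A * r ^ (n * K) := Finset.sum_le_sum fun σ _ => hterm σ
    _ = (K + 1) ^ n * A * r ^ (n * K) := by simp [mul_assoc]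

end BoxPolynomial

lemma MvPolynomial.differentiable_aeval {ι R : Type*} [Fintype ι] [CommSemiring R] [Algebra R ℂ]
    (p : MvPolynomial ι R) : Differentiable ℂ fun z : ι → ℂ => aeval z p := fun z =>
  (AnalyticAt.aeval_mvPolynomial (f := id)
    (fun i => (ContinuousLinearMap.proj (R := ℂ) (φ := fun _ : ι => ℂ) i).analyticAt z)
    p).differentiableAt

theorem exists_intPoly_of_isTraceCover {n K H : ℕ} {D X : Set (Fin n → ℂ)} {r ε : ℝ}
    (hr : 1 ≤ r) (hD : D ⊆ Metric.closedBall 0 r) {C : Finset (Set ((Fin n → ℂ) → ℂ))}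
    (hC : IsTraceCover n D X ε C) (hcard : C.card < (H + 1) ^ (K + 1) ^ n) :
    ∃ P : MvPolynomial (Fin n) ℤ, P ≠ 0 ∧ P.totalDegree ≤ n * K ∧ (∀ d, |P.coeff d| ≤ H) ∧
      ∀ z ∈ X, ‖aeval z P‖ ≤ 2 * ε * ((K + 1) ^ n * (H + 1) * r ^ (n * K)) := by
  set B : ℝ := (K + 1) ^ n * (H + 1) * r ^ (n * K)
  have hB : 0 < B := by positivity
  let P (a : (Fin n → Fin (K + 1)) → Fin (H + 1)) : MvPolynomial (Fin n) ℤ :=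
    boxPoly fun σ => ((a σ : ℕ) : ℤ)
  have hP_le : ∀ a, ∀ z ∈ D, ‖aeval z (P a) / (B : ℂ)‖ ≤ 1 := by
    intro a z hz
    rw [norm_div, Complex.norm_real, Real.norm_of_nonneg hB.le, div_le_one hB]
    refine norm_aeval_boxPoly_le hr (fun σ => ?_) (mem_closedBall_zero_iff.1 (hD hz))
    rw [Int.cast_natCast, Nat.abs_cast]
    exact_mod_cast (a σ).is_le.trans (Nat.le_succ H)
  obtain ⟨a, b, hab, hclose⟩ := hC.exists_ne_dist_le (fun a z => aeval z (P a) / (B : ℂ))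
    (fun a => by
      simpa only [div_eq_mul_inv] using ((differentiable_aeval (P a)).mul_const _).differentiableOn)
    hP_le (by simpa using hcard)
  have hab' : (fun σ => ((a σ : ℕ) : ℤ) - ((b σ : ℕ) : ℤ)) ≠ 0 := fun h =>
    hab (funext fun σ => Fin.ext (by simpa [sub_eq_zero] using congrFun h σ))
  refine ⟨boxPoly fun σ => ((a σ : ℕ) : ℤ) - ((b σ : ℕ) : ℤ), boxPoly_ne_zero hab',
    totalDegree_boxPoly_le _, abs_coeff_boxPoly_le (Nat.cast_nonneg H) (fun σ => ?_),
    fun z hz => ?_⟩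
  · have := (a σ).is_le
    have := (b σ).is_le
    rw [abs_le]
    omega
  · have hdist := hclose z hz
    rw [dist_eq_norm, ← sub_div, norm_div, Complex.norm_real, Real.norm_of_nonneg hB.le,
      div_le_iff₀ hB, ← map_sub] at hdist
    exact (boxPoly_sub _ _).symm ▸ hdist

section Asymptotics

lemma eventually_mul_rpow_lt_rpow {a b : ℝ} (hab : a < b) (k : ℝ) :
    ∀ᶠ N : ℕ in atTop, k * (N : ℝ) ^ a < (N : ℝ) ^ b := by
  have hgrow : Tendsto (fun N : ℕ => (N : ℝ) ^ (b - a)) atTop atTop :=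
    (tendsto_rpow_atTop (by linarith)).comp tendsto_natCast_atTop_atTop
  filter_upwards [hgrow.eventually_gt_atTop k, eventually_gt_atTop 0] with N hN hN0
  have hNpos : (0 : ℝ) < N := by exact_mod_cast hN0
  calc k * (N : ℝ) ^ a < (N : ℝ) ^ (b - a) * (N : ℝ) ^ a :=
        mul_lt_mul_of_pos_right hN (rpow_pos_of_pos hNpos a)
    _ = (N : ℝ) ^ b := by rw [← rpow_add hNpos, sub_add_cancel]

lemma tendsto_exp_neg_three_mul_rpow {h : ℝ} (hh : 0 < h) :
    Tendsto (fun N : ℕ => exp (-(3 * (N : ℝ) ^ h))) atTop (𝓝[>] 0) :=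
  tendsto_nhdsWithin_iff.2 ⟨tendsto_exp_atBot.comp <| tendsto_neg_atTop_atBot.comp <|
      ((tendsto_rpow_atTop hh).comp tendsto_natCast_atTop_atTop).const_mul_atTop three_pos,
    Eventually.of_forall fun _ => exp_pos _⟩

lemma eventually_exp_rpow_lt_pow {n : ℕ} {h c : ℝ} (hn : 0 < n) (hc : h * c < n + h) :
    ∀ᶠ N : ℕ in atTop, exp ((3 * (N : ℝ) ^ h) ^ c) <
      ((⌊exp ((N : ℝ) ^ h)⌋₊ : ℝ) + 1) ^ (N / n + 1) ^ n := by
  filter_upwards [eventually_mul_rpow_lt_rpow hc (3 ^ c * n ^ n), eventually_gt_atTop 0]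
    with N hN hN0
  have hNpos : (0 : ℝ) < N := by exact_mod_cast hN0
  have hN_le : (N : ℝ) ≤ n * ((N / n : ℕ) + 1) := by
    exact_mod_cast (Nat.lt_div_mul_add (a := N) hn).le.trans_eq (by ring)
  have hNn : (N : ℝ) ^ n ≤ n ^ n * (((N / n + 1) ^ n : ℕ) : ℝ) := by
    push_cast
    rw [← mul_pow]
    exact pow_le_pow_left₀ hNpos.le hN_le n
  have hexp : (3 * (N : ℝ) ^ h) ^ c < ((N / n + 1) ^ n : ℕ) * (N : ℝ) ^ h := by
    rw [mul_rpow (by norm_num) (by positivity), ← rpow_mul hNpos.le]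
    rw [rpow_add hNpos, rpow_natCast] at hN
    refine lt_of_mul_lt_mul_left ?_ (by positivity : (0 : ℝ) ≤ n ^ n)
    calc (n : ℝ) ^ n * (3 ^ c * (N : ℝ) ^ (h * c)) = 3 ^ c * n ^ n * (N : ℝ) ^ (h * c) := by ring
      _ < (N : ℝ) ^ n * (N : ℝ) ^ h := hN
      _ ≤ n ^ n * (((N / n + 1) ^ n : ℕ) : ℝ) * (N : ℝ) ^ h := by gcongr
      _ = n ^ n * ((((N / n + 1) ^ n : ℕ) : ℝ) * (N : ℝ) ^ h) := by ring
  calc exp ((3 * (N : ℝ) ^ h) ^ c) < exp (((N / n + 1) ^ n : ℕ) * (N : ℝ) ^ h) :=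
        exp_lt_exp.2 hexp
    _ = exp ((N : ℝ) ^ h) ^ (N / n + 1) ^ n := exp_nat_mul _ _
    _ < ((⌊exp ((N : ℝ) ^ h)⌋₊ : ℝ) + 1) ^ (N / n + 1) ^ n :=
        pow_lt_pow_left₀ (Nat.lt_floor_add_one _) (exp_pos _).le (by positivity)

lemma eventually_two_mul_exp_mul_lt {n : ℕ} {h r : ℝ} (hh : 1 < h) (hr : 1 ≤ r) :
    ∀ᶠ N : ℕ in atTop, 2 * exp (-(3 * (N : ℝ) ^ h)) *
      (((N / n : ℕ) + 1 : ℝ) ^ n * ((⌊exp ((N : ℝ) ^ h)⌋₊ : ℝ) + 1) * r ^ (n * (N / n))) <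
      exp (-(N : ℝ) ^ h) := by
  filter_upwards [eventually_mul_rpow_lt_rpow hh (n + r + 3), eventually_ge_atTop 1]
    with N hN hN1
  rw [rpow_one] at hN
  have hN1' : (1 : ℝ) ≤ N := by exact_mod_cast hN1
  set E := exp ((N : ℝ) ^ h)
  have hE : 1 ≤ E := one_le_exp (by positivity)
  have hbox : ((N / n : ℕ) + 1 : ℝ) ^ n ≤ exp (n * N) := by
    rw [exp_nat_mul]
    refine pow_le_pow_left₀ (by positivity) ?_ n
    have : ((N / n : ℕ) : ℝ) ≤ N := by exact_mod_cast Nat.div_le_self N n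
    linarith [add_one_le_exp (N : ℝ)]
  have hheight : (⌊E⌋₊ : ℝ) + 1 ≤ 2 * E := by linarith [Nat.floor_le (exp_pos ((N : ℝ) ^ h)).le]
  have hradius : r ^ (n * (N / n)) ≤ exp (r * N) := by
    rw [mul_comm r, exp_nat_mul]
    calc r ^ (n * (N / n)) ≤ r ^ N := pow_le_pow_right₀ hr (Nat.mul_div_le N n)
      _ ≤ exp r ^ N := pow_le_pow_left₀ (by positivity) (by linarith [add_one_le_exp r]) N
  have hfour : (4 : ℝ) ≤ exp (3 * N) := by linarith [add_one_le_exp (3 * (N : ℝ))]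
  calc 2 * exp (-(3 * (N : ℝ) ^ h)) *
        (((N / n : ℕ) + 1 : ℝ) ^ n * ((⌊E⌋₊ : ℝ) + 1) * r ^ (n * (N / n)))
      ≤ 2 * exp (-(3 * (N : ℝ) ^ h)) * (exp (n * N) * (2 * E) * exp (r * N)) := by gcongr
    _ = exp (-(3 * (N : ℝ) ^ h)) * (4 * exp (n * N) * E * exp (r * N)) := by ring
    _ ≤ exp (-(3 * (N : ℝ) ^ h)) * (exp (3 * N) * exp (n * N) * E * exp (r * N)) := by gcongr
    _ = exp ((n + r + 3) * N - 2 * (N : ℝ) ^ h) := by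
      simp only [E, ← exp_add]
      ring_nf
    _ < exp (-(N : ℝ) ^ h) := exp_lt_exp.2 (by linarith)

lemma pos_and_exists_exponent {n : ℕ} {s h : ℝ} (h1 : 1 < h) (h2 : h < n / s) :
    0 < s ∧ 0 < n ∧ ∃ c, s + 1 < c ∧ h * c < n + h := by
  have hs0 : 0 < s := by
    by_contra! hs0
    linarith [div_nonpos_of_nonneg_of_nonpos (Nat.cast_nonneg (α := ℝ) n) hs0]
  have hhs : h * s < n := (lt_div_iff₀ hs0).1 h2
  refine ⟨hs0, by exact_mod_cast (show (0 : ℝ) < n by nlinarith), ?_⟩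
  obtain ⟨c, hsc, hcn⟩ : ∃ c, s + 1 < c ∧ c < n / h + 1 :=
    exists_between (by rw [add_lt_add_iff_right, lt_div_iff₀ (by linarith)]; linarith)
  rw [← sub_lt_iff_lt_add, lt_div_iff₀ (by linarith)] at hcn
  exact ⟨c, hsc, by linarith⟩

end Asymptotics

theorem small_integer_polynomial_general (n : ℕ) (X : Set (Fin n → ℂ))
    (s : ℝ) (hs : KDim n X = s) (h : ℝ) (h1 : 1 < h) (h2 : h < n / s) :
    ∃ N₀ : ℕ, ∀ N : ℕ, N₀ ≤ N →
      ∃ P : MvPolynomial (Fin n) ℤ, P ≠ 0 ∧ P.totalDegree ≤ N ∧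
        (∀ d : Fin n →₀ ℕ, ((|P.coeff d| : ℤ) : ℝ) ≤ Real.exp ((N : ℝ) ^ h)) ∧
        ∀ z ∈ X, ‖(MvPolynomial.aeval z) P‖ < Real.exp (-(N : ℝ) ^ h) := by
  obtain ⟨hs0, hn, c, hsc, hc⟩ := pos_and_exists_exponent h1 h2
  set r := sSup (norm '' X) + 1
  have hr : 1 ≤ r := le_add_of_nonneg_left (Real.sSup_nonneg fun _ ⟨z, _, hz⟩ => hz ▸ norm_nonneg z)
  have hΨ : Psi n X (Metric.ball 0 r) = s := hs
  have hΨ1 : Psi n X (Metric.ball 0 r) ≠ -1 := by rw [hΨ]; linarith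
  obtain ⟨N₀, hN₀⟩ := eventually_atTop.1 <|
    ((tendsto_exp_neg_three_mul_rpow (zero_lt_one.trans h1)).eventually
      (eventually_traceCoverNum_le (c := c) hΨ1 (by rwa [hΨ]))).and <|
    (eventually_exp_rpow_lt_pow hn hc).and (eventually_two_mul_exp_mul_lt h1 hr)
  refine ⟨N₀, fun N hN => ?_⟩
  obtain ⟨hcover, hcount, hsmall⟩ := hN₀ N hN
  simp only [one_div, log_inv, log_exp, neg_neg] at hcover
  obtain ⟨C, hC, hCcard⟩ := exists_isTraceCover_of_Psi_ne hΨ1 (exp_pos (-(3 * (N : ℝ) ^ h)))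
  obtain ⟨P, hP0, hPdeg, hPcoeff, hPX⟩ := exists_intPoly_of_isTraceCover (K := N / n)
    (H := ⌊exp ((N : ℝ) ^ h)⌋₊) hr Metric.ball_subset_closedBall hC <| by
      rw [← hCcard] at hcover
      exact_mod_cast hcover.trans_lt hcount
  refine ⟨P, hP0, hPdeg.trans (Nat.mul_div_le N n), fun d => ?_,
    fun z hz => (hPX z hz).trans_lt hsmall⟩
  calc ((|P.coeff d| : ℤ) : ℝ) ≤ ⌊exp ((N : ℝ) ^ h)⌋₊ := by exact_mod_cast hPcoeff d
    _ ≤ exp ((N : ℝ) ^ h) := Nat.floor_le (exp_pos _).le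

/-- if `K-dim X = s < n` then for every `1 < h < n/s` and all sufficiently
large `N` there is a nonzero integer polynomial of degree `≤ N`, with coefficients bounded
by `exp(N^h)`, whose sup on `X` is `< exp(−N^h)`. -/
theorem small_integer_polynomial (n : ℕ) (X : Set (Fin n → ℂ)) (hX : IsCompact X)
    (s : ℝ) (hs : KDim n X = s) (hsn : s < n) (h : ℝ) (h1 : 1 < h) (h2 : h < n / s) :
    ∃ N₀ : ℕ, ∀ N : ℕ, N₀ ≤ N →
      ∃ P : MvPolynomial (Fin n) ℤ, P ≠ 0 ∧ P.totalDegree ≤ N ∧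
        (∀ d : Fin n →₀ ℕ, ((|P.coeff d| : ℤ) : ℝ) ≤ Real.exp ((N : ℝ) ^ h)) ∧
        ∀ z ∈ X, ‖(MvPolynomial.aeval z) P‖ < Real.exp (-(N : ℝ) ^ h) :=
  small_integer_polynomial_general n X s hs h h1 h2
end

section
/- For every 0 < r < 1 and every positive integer N there exists a finite set X_{r,N} ⊂ Δ(0,r) ⊂ C^n such that every polynomial P of degree ≤ N with sup_{Δ(0,1)} |P| ≥ 1 satisfies max_{z ∈ X_{r,N}} |P(z)| ≥ (1/2) r^N. In particular, a maximal ε-distinguishable subset of Δ(0,r) with ε = ((1−r)/(2N)) r^N has this property. -/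
/-!
Let `M` be the maximum of `|P|` on the closed unit polydisk. Homogenizing, `t ↦ t ^ N P(t⁻¹ w)` is
a polynomial in `t`, and the maximum modulus principle on the disc `|t| ≤ r⁻¹` gives the
Bernstein-type bound `r ^ N M ≤ sup_{Δ(0,r)} |P|`. Cauchy's estimate makes `P` Lipschitz on
`Δ(0,r)` with constant `M / (1 - r)`, so on an `ε`-net with `ε = (1 - r) r ^ N / (2N)` the
maximum of `|P|` is at least `r ^ N M - r ^ N M / (2N) ≥ r ^ N M / 2`. Finite nets exist since
`Δ(0,r)` is totally bounded.
-/

open Metric Set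

theorem norm_fderiv_le_of_forall_mem_closedBall_norm_le {E F : Type*} [NormedAddCommGroup E]
    [NormedSpace ℂ E] [NormedAddCommGroup F] [NormedSpace ℂ F] {f : E → F} {z : E} {ρ M : ℝ}
    (hf : Differentiable ℂ f) (hρ : 0 < ρ) (hM : ∀ y ∈ closedBall z ρ, ‖f y‖ ≤ M) :
    ‖fderiv ℂ f z‖ ≤ M / ρ := by
  have hM0 : 0 ≤ M := (norm_nonneg _).trans (hM z (mem_closedBall_self hρ.le))
  refine ContinuousLinearMap.opNorm_le_bound _ (by positivity) fun u ↦ ?_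
  rcases eq_or_ne u 0 with rfl | hu
  · simp
  have hu0 : 0 < ‖u‖ := norm_pos_iff.mpr hu
  have hline : HasDerivAt (fun t : ℂ ↦ f (z + t • u)) (fderiv ℂ f z u) 0 := by
    have := (hf (z + (0 : ℂ) • u)).hasFDerivAt.comp_hasDerivAt (0 : ℂ)
      (((hasDerivAt_id (0 : ℂ)).smul_const u).const_add z)
    simpa [Function.comp_def] using this
  have hsphere : ∀ t ∈ sphere (0 : ℂ) (ρ / ‖u‖), ‖f (z + t • u)‖ ≤ M := by
    intro t ht
    refine hM _ ?_
    rw [mem_sphere_zero_iff_norm] at ht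
    rw [mem_closedBall_iff_norm, add_sub_cancel_left, norm_smul, ht, div_mul_cancel₀ _ hu0.ne']
  have hcauchy := Complex.norm_deriv_le_of_forall_mem_sphere_norm_le
    (f := fun t : ℂ ↦ f (z + t • u)) (div_pos hρ hu0)
    (hf.comp (by fun_prop)).diffContOnCl hsphere
  rw [hline.deriv] at hcauchy
  calc ‖fderiv ℂ f z u‖ ≤ M / (ρ / ‖u‖) := hcauchy
    _ = M / ρ * ‖u‖ := by field_simp

theorem TotallyBounded.exists_finset_forall_dist_le {α : Type*} [PseudoMetricSpace α]
    {s : Set α} {ε : ℝ} (hs : TotallyBounded s) (hε : 0 < ε) :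
    ∃ Y : Finset α, (∀ y ∈ Y, y ∈ s) ∧ ∀ x ∈ s, ∃ y ∈ Y, dist x y ≤ ε := by
  obtain ⟨t, hts, htfin, hcover⟩ := finite_approx_of_totallyBounded hs ε hε
  refine ⟨htfin.toFinset, fun y hy ↦ hts (htfin.mem_toFinset.mp hy), fun x hx ↦ ?_⟩
  obtain ⟨y, hy, hxy⟩ := mem_iUnion₂.mp (hcover hx)
  exact ⟨y, htfin.mem_toFinset.mpr hy, (mem_ball.mp hxy).le⟩

theorem exists_mem_forall_norm_le_add_of_net {E F : Type*} [PseudoMetricSpace E]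
    [SeminormedAddCommGroup F] {f : E → F} {s : Set E} {Y : Finset E} {L ε : ℝ} (hL : 0 ≤ L)
    (hf : ∀ x ∈ s, ∀ y ∈ s, ‖f x - f y‖ ≤ L * dist x y) (hs : s.Nonempty)
    (hY : ∀ y ∈ Y, y ∈ s) (hnet : ∀ x ∈ s, ∃ y ∈ Y, dist x y ≤ ε) :
    ∃ z ∈ Y, ∀ x ∈ s, ‖f x‖ ≤ ‖f z‖ + L * ε := by
  have hYne : Y.Nonempty := by
    obtain ⟨y, hy, -⟩ := hnet _ hs.some_mem
    exact ⟨y, hy⟩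
  obtain ⟨z, hz, hmax⟩ := Y.exists_max_image (‖f ·‖) hYne
  refine ⟨z, hz, fun x hx ↦ ?_⟩
  obtain ⟨y, hy, hxy⟩ := hnet x hx
  calc ‖f x‖ ≤ ‖f y‖ + ‖f x - f y‖ := norm_le_norm_add_norm_sub' _ _
    _ ≤ ‖f z‖ + L * ε := add_le_add (hmax y hy)
        ((hf x hx y (hY y hy)).trans (mul_le_mul_of_nonneg_left hxy hL))

namespace MvPolynomial

variable {σ 𝕜 : Type*} [NontriviallyNormedField 𝕜]

theorem exists_differentiable_eq_pow_mul_eval_inv_smul {N : ℕ} (P : MvPolynomial σ 𝕜)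
    (hP : P.totalDegree ≤ N) (w : σ → 𝕜) :
    ∃ g : 𝕜 → 𝕜, Differentiable 𝕜 g ∧ ∀ t ≠ 0, g t = t ^ N * eval (t⁻¹ • w) P := by
  refine ⟨fun t ↦ ∑ d ∈ P.support,
    (P.coeff d * d.prod fun i e ↦ w i ^ e) * t ^ (N - d.sum fun _ e ↦ e), by fun_prop, ?_⟩
  intro t ht
  simp only [eval_eq, Finset.mul_sum]
  refine Finset.sum_congr rfl fun d hd ↦ ?_
  have hdeg : (d.sum fun _ e ↦ e) ≤ N := (le_totalDegree hd).trans hP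
  have hprod : (∏ i ∈ d.support, (t⁻¹ • w) i ^ d i) =
      t⁻¹ ^ (d.sum fun _ e ↦ e) * d.prod fun i e ↦ w i ^ e := by
    simp only [Pi.smul_apply, smul_eq_mul, mul_pow, Finset.prod_mul_distrib,
      Finset.prod_pow_eq_pow_sum, Finsupp.sum, Finsupp.prod]
  rw [hprod, pow_sub₀ t ht hdeg, inv_pow]
  ring

theorem pow_mul_norm_eval_le {ι : Type*} [Fintype ι] {N : ℕ} {r C : ℝ} {P : MvPolynomial ι ℂ}
    (hP : P.totalDegree ≤ N) (hr0 : 0 < r) (hr1 : r ≤ 1)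
    (hC : ∀ z ∈ ball (0 : ι → ℂ) r, ‖eval z P‖ ≤ C) {w : ι → ℂ} (hw : ‖w‖ ≤ 1) :
    r ^ N * ‖eval w P‖ ≤ C := by
  have hC' : ∀ z ∈ closedBall (0 : ι → ℂ) r, ‖eval z P‖ ≤ C := by
    rw [← closure_ball 0 hr0.ne']
    exact closure_minimal hC <| isClosed_le (continuous_eval P).norm continuous_const
  obtain ⟨g, hg, hgP⟩ := exists_differentiable_eq_pow_mul_eval_inv_smul P hP w
  -- on `|t| = r⁻¹` the point `t⁻¹ • w` lies in the closed polydisk of radius `r`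
  have hsphere : ∀ t ∈ frontier (ball (0 : ℂ) r⁻¹), ‖g t‖ ≤ r⁻¹ ^ N * C := by
    intro t ht
    rw [frontier_ball 0 (inv_ne_zero hr0.ne'), mem_sphere_zero_iff_norm] at ht
    have ht0 : t ≠ 0 := norm_pos_iff.mp (ht ▸ inv_pos.mpr hr0)
    rw [hgP t ht0, norm_mul, norm_pow, ht]
    refine mul_le_mul_of_nonneg_left (hC' _ ?_) (by positivity)
    rw [mem_closedBall_zero_iff, norm_smul, norm_inv, ht, inv_inv]
    exact mul_le_of_le_one_right hr0.le hw
  have hone : (1 : ℂ) ∈ closure (ball 0 r⁻¹) := by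
    rw [closure_ball 0 (inv_ne_zero hr0.ne'), mem_closedBall_zero_iff, norm_one]
    exact one_le_inv₀ hr0 |>.mpr hr1
  have hg1 := Complex.norm_le_of_forall_mem_frontier_norm_le isBounded_ball hg.diffContOnCl
    hsphere hone
  rw [hgP 1 one_ne_zero, one_pow, one_mul, inv_one, one_smul] at hg1
  calc r ^ N * ‖eval w P‖ ≤ r ^ N * (r⁻¹ ^ N * C) := by gcongr
    _ = C := by rw [inv_pow, mul_inv_cancel_left₀ (pow_ne_zero N hr0.ne')]

theorem exists_mem_net_pow_mul_norm_eval_le {ι : Type*} [Fintype ι] {N : ℕ} {r : ℝ}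
    {P : MvPolynomial ι ℂ} {Y : Finset (ι → ℂ)} (hN : 0 < N) (hr0 : 0 < r) (hr1 : r < 1)
    (hP : P.totalDegree ≤ N) (hY : ∀ y ∈ Y, y ∈ ball 0 r)
    (hnet : ∀ x ∈ ball 0 r, ∃ y ∈ Y, dist x y ≤ (1 - r) / (2 * N) * r ^ N)
    {w : ι → ℂ} (hw : ‖w‖ ≤ 1) :
    ∃ z ∈ Y, r ^ N * ‖eval w P‖ / 2 ≤ ‖eval z P‖ := by
  have hf : Differentiable ℂ fun z ↦ eval z P := fun z ↦
    (AnalyticOnNhd.eval_mvPolynomial P z (mem_univ z)).differentiableAt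
  obtain ⟨w₀, hw₀, hmax⟩ := (isCompact_closedBall (0 : ι → ℂ) 1).exists_isMaxOn
    ⟨w, mem_closedBall_zero_iff.mpr hw⟩ (continuous_eval P).norm.continuousOn
  set M := ‖eval w₀ P‖
  have h1r : 0 < 1 - r := sub_pos.mpr hr1
  have hgrad : ∀ z ∈ ball (0 : ι → ℂ) r, ‖fderiv ℂ (fun z ↦ eval z P) z‖ ≤ M / (1 - r) := by
    refine fun z hz ↦ norm_fderiv_le_of_forall_mem_closedBall_norm_le hf h1r fun y hy ↦ hmax ?_
    refine closedBall_subset_closedBall' ?_ hy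
    rw [mem_ball] at hz
    linarith
  have hlip : ∀ x ∈ ball (0 : ι → ℂ) r, ∀ y ∈ ball (0 : ι → ℂ) r,
      ‖eval x P - eval y P‖ ≤ M / (1 - r) * dist x y := fun x hx y hy ↦ by
    rw [dist_eq_norm]
    exact (convex_ball 0 r).norm_image_sub_le_of_norm_fderiv_le (fun z _ ↦ hf z) hgrad hy hx
  obtain ⟨z, hz, hbound⟩ := exists_mem_forall_norm_le_add_of_net (by positivity) hlip
    ⟨0, mem_ball_self hr0⟩ hY hnet
  have hbernstein := pow_mul_norm_eval_le hP hr0 hr1.le hbound (mem_closedBall_zero_iff.mp hw₀)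
  have hMw : ‖eval w P‖ ≤ M := hmax (mem_closedBall_zero_iff.mpr hw)
  have hN1 : (1 : ℝ) ≤ N := Nat.one_le_cast.mpr hN
  have hdrop : M / (1 - r) * ((1 - r) / (2 * N) * r ^ N) ≤ r ^ N * M / 2 := by
    rw [show M / (1 - r) * ((1 - r) / (2 * N) * r ^ N) = r ^ N * M / (2 * N) by
      field_simp]
    gcongr
    linarith
  refine ⟨z, hz, ?_⟩
  nlinarith [pow_pos hr0 N]

end MvPolynomial

theorem polydisk_zero_eq_ball {n : ℕ} {r : ℝ} (hr : 0 < r) :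
    polydisk n 0 r = ball 0 r := by
  ext z
  simp [polydisk, pi_norm_lt_iff hr]

/-- for `0 < r < 1` and `N ≥ 1` there is a finite set `X_{r,N} ⊆ Δ(0,r)` on
which every polynomial of degree `≤ N`, normalized to have supremum `≥ 1` on the unit
polydisk, attains a value `≥ (1/2) r^N`; moreover any maximal `ε`-distinguishable subset of
`Δ(0,r)` with `ε = ((1−r)/(2N)) r^N` has this property. -/
theorem finite_norming_set (n : ℕ) (r : ℝ) (hr0 : 0 < r) (hr1 : r < 1)
    (N : ℕ) (hN : 0 < N) :
    (∃ Y : Finset (Fin n → ℂ), (∀ z ∈ Y, z ∈ polydisk n 0 r) ∧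
      ∀ P : MvPolynomial (Fin n) ℂ, P.totalDegree ≤ N →
        (∃ w : Fin n → ℂ, (∀ j, ‖w j‖ ≤ 1) ∧ 1 ≤ ‖MvPolynomial.eval w P‖) →
        ∃ z ∈ Y, (1 / 2) * r ^ N ≤ ‖MvPolynomial.eval z P‖) ∧
    (∀ Y : Finset (Fin n → ℂ), (∀ z ∈ Y, z ∈ polydisk n 0 r) →
      (∀ x ∈ Y, ∀ y ∈ Y, x ≠ y → ((1 - r) / (2 * N)) * r ^ N < dist x y) →
      (∀ x ∈ polydisk n 0 r, ∃ y ∈ Y, dist x y ≤ ((1 - r) / (2 * N)) * r ^ N) →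
      ∀ P : MvPolynomial (Fin n) ℂ, P.totalDegree ≤ N →
        (∃ w : Fin n → ℂ, (∀ j, ‖w j‖ ≤ 1) ∧ 1 ≤ ‖MvPolynomial.eval w P‖) →
        ∃ z ∈ Y, (1 / 2) * r ^ N ≤ ‖MvPolynomial.eval z P‖) := by
  rw [polydisk_zero_eq_ball hr0]
  have hnorming : ∀ Y : Finset (Fin n → ℂ), (∀ z ∈ Y, z ∈ ball 0 r) →
      (∀ x ∈ ball 0 r, ∃ y ∈ Y, dist x y ≤ ((1 - r) / (2 * N)) * r ^ N) →
      ∀ P : MvPolynomial (Fin n) ℂ, P.totalDegree ≤ N →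
        (∃ w : Fin n → ℂ, (∀ j, ‖w j‖ ≤ 1) ∧ 1 ≤ ‖MvPolynomial.eval w P‖) →
        ∃ z ∈ Y, (1 / 2) * r ^ N ≤ ‖MvPolynomial.eval z P‖ := by
    rintro Y hY hnet P hP ⟨w, hw, hw1⟩
    obtain ⟨z, hz, hPz⟩ := MvPolynomial.exists_mem_net_pow_mul_norm_eval_le hN hr0 hr1 hP hY hnet
      ((pi_norm_le_iff_of_nonneg zero_le_one).mpr hw)
    exact ⟨z, hz, by nlinarith [pow_pos hr0 N]⟩
  refine ⟨?_, fun Y hY _ ↦ hnorming Y hY⟩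
  have hε : 0 < (1 - r) / (2 * N) * r ^ N := by
    have : (0 : ℝ) < N := Nat.cast_pos.mpr hN
    have : 0 < 1 - r := sub_pos.mpr hr1
    positivity
  obtain ⟨Y, hY, hnet⟩ := TotallyBounded.exists_finset_forall_dist_le
    ((isCompact_closedBall (0 : Fin n → ℂ) r).totallyBounded.subset ball_subset_closedBall) hε
  exact ⟨Y, hY, hnorming Y hY hnet⟩
end
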